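/- (Expansion of x^n in q-Genocchi polynomials.) For every integer n ≥ 0 and all x ∈ ℂ: x^n = (2^{n−1}/((−1;q)_n [n+1]_q)) · ( Σ_{k=0}^{n+1} [n+1 choose k]_q ((−1;q)_{n+1−k}/2^{n+1−k}) G_{k,q}(x) + G_{n+1,q}(x) ). -/

import Mathlib

/-! The generating identity at `y = 0` reads `G(t) (𝓔_q(t) + 1) = 2 t 𝓔_q(tx)`, since `𝓔_q(0) = 1`.
Comparing the coefficients of `t^{n+1}` and multiplying by `[n+1]_q!` turns the product on the left
into a `q`-binomial convolution, giving
`Σ_k [n+1 choose k]_q ((-1;q)_{n+1-k}/2^{n+1-k}) G_{k,q}(x) + G_{n+1,q}(x) = 2 [n+1]_q (-1;q)_n x^n / 2^n`,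
which is solved for `x^n`. -/

open Finset PowerSeries

/-- The `q`-number `[n]_q = (1 - q^n)/(1 - q)`. -/
noncomputable def qNum (q : ℂ) (n : ℕ) : ℂ := (1 - q ^ n) / (1 - q)

/-- The `q`-factorial `[n]_q!`. -/
noncomputable def qFact (q : ℂ) : ℕ → ℂ
  | 0 => 1
  | n + 1 => qNum q (n + 1) * qFact q n

/-- The `q`-shifted factorial `(a; q)_n = ∏_{j=0}^{n-1} (1 - q^j a)`. -/
noncomputable def qShift (a q : ℂ) (n : ℕ) : ℂ := ∏ j ∈ Finset.range n, (1 - q ^ j * a)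

/-- The Gaussian binomial coefficient `[n choose k]_q = (q;q)_n / ((q;q)_{n-k} (q;q)_k)`. -/
noncomputable def qBinom (q : ℂ) (n k : ℕ) : ℂ :=
  qShift q q n / (qShift q q (n - k) * qShift q q k)

/-- The formal power series (in `t`) `𝓔_q(tx) = Σ_{n≥0} (-1;q)_n (x)^n t^n / (2^n [n]_q!)`. -/
noncomputable def qExp (q x : ℂ) : PowerSeries ℂ :=
  PowerSeries.mk fun n => qShift (-1) q n * x ^ n / (2 ^ n * qFact q n)

/-- The generating series `Σ_{n≥0} a_n t^n / [n]_q!` of a sequence `a`. -/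
noncomputable def qGen (q : ℂ) (a : ℕ → ℂ) : PowerSeries ℂ :=
  PowerSeries.mk fun n => a n / qFact q n

/-- The `q`-addition `(x ⊕_q y)^n`. -/
noncomputable def qAdd (q x y : ℂ) (n : ℕ) : ℂ :=
  ∑ k ∈ Finset.range (n + 1),
    qBinom q n k * (qShift (-1) q k * qShift (-1) q (n - k) / 2 ^ n) * x ^ k * y ^ (n - k)

@[simp]
lemma coeff_qGen (q : ℂ) (a : ℕ → ℂ) (n : ℕ) : coeff n (qGen q a) = a n / qFact q n :=
  coeff_mk _ _

lemma qExp_eq_qGen (q x : ℂ) : qExp q x = qGen q fun n => qShift (-1) q n * x ^ n / 2 ^ n := by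
  ext n
  simp [qExp, div_div]

lemma qExp_zero (q : ℂ) : qExp q 0 = 1 := by
  ext (_ | n) <;> simp [qExp, qShift, qFact]

section

variable {q : ℂ}

lemma one_sub_pow_ne_zero (hq : ¬IsOfFinOrder q) {m : ℕ} (hm : m ≠ 0) : (1 : ℂ) - q ^ m ≠ 0 :=
  fun h => hq (isOfFinOrder_iff_pow_eq_one.2 ⟨m, Nat.pos_of_ne_zero hm, (sub_eq_zero.1 h).symm⟩)

lemma one_add_pow_ne_zero (hq : ¬IsOfFinOrder q) (m : ℕ) : (1 : ℂ) + q ^ m ≠ 0 := by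
  rcases eq_or_ne m 0 with rfl | hm
  · norm_num
  intro h
  have hsq : q ^ (2 * m) = 1 := by
    rw [pow_mul', eq_neg_of_add_eq_zero_right h]
    norm_num
  exact one_sub_pow_ne_zero hq (by omega) (sub_eq_zero.2 hsq.symm)

lemma qNum_ne_zero (hq : ¬IsOfFinOrder q) {m : ℕ} (hm : m ≠ 0) : qNum q m ≠ 0 :=
  div_ne_zero (one_sub_pow_ne_zero hq hm) (by simpa using one_sub_pow_ne_zero hq one_ne_zero)

lemma qFact_ne_zero (hq : ¬IsOfFinOrder q) (m : ℕ) : qFact q m ≠ 0 := by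
  induction m with
  | zero => simp [qFact]
  | succ k ih => exact mul_ne_zero (qNum_ne_zero hq k.succ_ne_zero) ih

lemma qShift_neg_one_ne_zero (hq : ¬IsOfFinOrder q) (m : ℕ) : qShift (-1) q m ≠ 0 :=
  Finset.prod_ne_zero_iff.2 fun j _ => by simpa using one_add_pow_ne_zero hq j

lemma qShift_self_eq (hq : q ≠ 1) (m : ℕ) :
    qShift q q m = (1 - q) ^ m * qFact q m := by
  have hq' : (1 : ℂ) - q ≠ 0 := sub_ne_zero.2 hq.symm
  induction m with
  | zero => simp [qShift, qFact]
  | succ k ih =>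
    rw [qShift, Finset.prod_range_succ, ← qShift, ih, qFact, qNum]
    field_simp
    ring

lemma qBinom_eq_qFact_div (hq : ¬IsOfFinOrder q) {n k : ℕ} (hk : k ≤ n) :
    qBinom q n k = qFact q n / (qFact q (n - k) * qFact q k) := by
  have hq1 : q ≠ 1 := fun h => hq (h ▸ IsOfFinOrder.one)
  have hq' : (1 : ℂ) - q ≠ 0 := sub_ne_zero.2 hq1.symm
  have := qFact_ne_zero hq (n - k)
  have := qFact_ne_zero hq k
  rw [qBinom, qShift_self_eq hq1, qShift_self_eq hq1, qShift_self_eq hq1,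
    ← Nat.sub_add_cancel hk, pow_add, Nat.add_sub_cancel]
  field_simp

lemma qFact_mul_coeff_qGen_mul (hq : ¬IsOfFinOrder q) (a b : ℕ → ℂ) (n : ℕ) :
    qFact q n * coeff n (qGen q a * qGen q b) =
      ∑ k ∈ range (n + 1), qBinom q n k * a k * b (n - k) := by
  rw [coeff_mul, Nat.sum_antidiagonal_eq_sum_range_succ_mk, mul_sum]
  refine sum_congr rfl fun k hk => ?_
  have := qFact_ne_zero hq k
  have := qFact_ne_zero hq (n - k)
  rw [coeff_qGen, coeff_qGen, qBinom_eq_qFact_div hq (Nat.lt_succ_iff.1 (mem_range.1 hk))]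
  field_simp

lemma sum_qBinom_mul_qGenocchi (hq : ¬IsOfFinOrder q) (x : ℂ) (g : ℕ → ℂ)
    (hg : qGen q g * (qExp q 1 + 1) = 2 * X * qExp q x) (n : ℕ) :
    (∑ k ∈ range (n + 2), qBinom q (n + 1) k * (qShift (-1) q (n + 1 - k) / 2 ^ (n + 1 - k)) * g k)
        + g (n + 1) = 2 * qNum q (n + 1) * qShift (-1) q n * x ^ n / 2 ^ n := by
  have hcoeff := congrArg (fun f => qFact q (n + 1) * coeff (n + 1) f) hg
  simp only [qExp_eq_qGen, mul_add, mul_one, map_add, qFact_mul_coeff_qGen_mul hq, coeff_qGen,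
    mul_div_cancel₀ _ (qFact_ne_zero hq _), mul_assoc, ← map_ofNat C, coeff_C_mul, coeff_succ_X_mul,
    one_pow] at hcoeff
  have := qFact_ne_zero hq n
  calc _ = ∑ k ∈ range (n + 1 + 1),
          qBinom q (n + 1) k * (g k * (qShift (-1) q (n + 1 - k) / 2 ^ (n + 1 - k))) + g (n + 1) := by
        simp only [mul_assoc, mul_comm (g _)]
    _ = _ := by rw [hcoeff, qFact]; field_simp

end

theorem pow_eq_sum_qGenocchi_general (q : ℂ) (hq1 : ‖q‖ < 1)
    (G : ℂ → ℂ → ℕ → ℂ)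
    (hG : ∀ x y : ℂ, qGen q (G x y) * (qExp q 1 + 1) = 2 * PowerSeries.X * qExp q x * qExp q y)
    (n : ℕ) (x : ℂ) :
    x ^ n = (2 : ℂ) ^ ((n : ℤ) - 1) / (qShift (-1) q n * qNum q (n + 1)) *
      ((∑ k ∈ Finset.range (n + 2),
          qBinom q (n + 1) k * (qShift (-1) q (n + 1 - k) / 2 ^ (n + 1 - k)) * G x 0 k)
        + G x 0 (n + 1)) := by
  have hq : ¬IsOfFinOrder q := fun h => hq1.ne h.norm_eq_one
  have hG0 := hG x 0
  rw [qExp_zero, mul_one] at hG0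
  rw [sum_qBinom_mul_qGenocchi hq x (G x 0) hG0, zpow_sub₀ two_ne_zero, zpow_one, zpow_natCast]
  have := qShift_neg_one_ne_zero hq n
  have := qNum_ne_zero hq n.succ_ne_zero
  field_simp

/-- Expansion of `x^n` in `q`-Genocchi polynomials:
`x^n = (2^{n-1}/((-1;q)_n [n+1]_q))(Σ_{k=0}^{n+1} [n+1 choose k]_q ((-1;q)_{n+1-k}/2^{n+1-k}) G_{k,q}(x) + G_{n+1,q}(x))`. -/
theorem pow_eq_sum_qGenocchi (q : ℂ) (hq0 : 0 < ‖q‖) (hq1 : ‖q‖ < 1)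
    (G : ℂ → ℂ → ℕ → ℂ)
    (hG : ∀ x y : ℂ, qGen q (G x y) * (qExp q 1 + 1) = 2 * PowerSeries.X * qExp q x * qExp q y)
    (n : ℕ) (x : ℂ) :
    x ^ n = (2 : ℂ) ^ ((n : ℤ) - 1) / (qShift (-1) q n * qNum q (n + 1)) *
      ((∑ k ∈ Finset.range (n + 2),
          qBinom q (n + 1) k * (qShift (-1) q (n + 1 - k) / 2 ^ (n + 1 - k)) * G x 0 k)
        + G x 0 (n + 1)) :=
  pow_eq_sum_qGenocchi_general q hq1 G hG n x
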